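/- arXiv:math/0402072 — 2 statements merged into one kernel-verified Lean document; each statement's English description precedes it below -/
import Mathlib

section
/- Let S ∈ Σ, and let β be an X-geodesic with endpoints x and y that does not intersect the closed 2δ-neighborhood of S. Then d_S(Pr(x,S), Pr(y,S)) ≤ C + 16δ; in particular, there is a path in X avoiding the interior of S that joins Pr(x,S) and Pr(y,S) and has length at most C + 16δ. -/
open scoped ENNReal Classical
open Set

noncomputable section

variable {X : Type*} [MetricSpace X]

/-- `γ` is a geodesic segment from `x` to `y`, parametrized by arclength on `[0, dist x y]`. -/
def IsGeodesicFrom (γ : ℝ → X) (x y : X) : Prop :=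
  γ 0 = x ∧ γ (dist x y) = y ∧
    ∀ s ∈ Set.Icc 0 (dist x y), ∀ t ∈ Set.Icc 0 (dist x y), dist (γ s) (γ t) = |s - t|

/-- A geodesic metric space: any two points are joined by a geodesic segment. -/
def GeodesicSpace (X : Type*) [MetricSpace X] : Prop :=
  ∀ x y : X, ∃ γ : ℝ → X, IsGeodesicFrom γ x y

/-- Gromov hyperbolicity via the Rips thin-triangles condition: each side of a geodesic
triangle is contained in the `δ`-neighborhood of the union of the other two sides. -/
def DeltaHyperbolic (X : Type*) [MetricSpace X] (δ : ℝ) : Prop :=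
  ∀ x y z : X, ∀ γ₁ γ₂ γ₃ : ℝ → X,
    IsGeodesicFrom γ₁ x y → IsGeodesicFrom γ₂ y z → IsGeodesicFrom γ₃ x z →
    ∀ t ∈ Set.Icc 0 (dist x z),
      ∃ p ∈ (γ₁ '' Set.Icc 0 (dist x y)) ∪ (γ₂ '' Set.Icc 0 (dist y z)), dist (γ₃ t) p ≤ δ

/-- `S` is `ε`-quasiconvex: every geodesic segment with endpoints in `S` stays in the
closed `ε`-neighborhood of `S`. -/
def QuasiconvexSet (ε : ℝ) (S : Set X) : Prop :=
  ∀ x ∈ S, ∀ y ∈ S, ∀ γ : ℝ → X, IsGeodesicFrom γ x y →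
    ∀ t ∈ Set.Icc 0 (dist x y), Metric.infDist (γ t) S ≤ ε

/-- `S` is geodesically convex: it contains every geodesic segment between its points. -/
def GeodConvex (S : Set X) : Prop :=
  ∀ x ∈ S, ∀ y ∈ S, ∀ γ : ℝ → X, IsGeodesicFrom γ x y →
    ∀ t ∈ Set.Icc 0 (dist x y), γ t ∈ S

/-- The context hypotheses on the collection `Σ'` of subsets of `X`:
pairwise disjoint closed `ε`-quasiconvex sets, any two distinct members at distance `≥ R`. -/
structure SigmaSystem (Sig : Set (Set X)) (ε R : ℝ) : Prop where
  closed : ∀ S ∈ Sig, IsClosed S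
  quasiconvex : ∀ S ∈ Sig, QuasiconvexSet ε S
  disjoint : ∀ S ∈ Sig, ∀ T ∈ Sig, S ≠ T → Disjoint S T
  far : ∀ S ∈ Sig, ∀ T ∈ Sig, S ≠ T → ∀ x ∈ S, ∀ y ∈ T, R ≤ dist x y

/-- The underlying set of the space `X_S`: `X` with the interiors of all members of `Σ'`
removed. -/
def XSset (Sig : Set (Set X)) : Set X :=
  {x : X | ∀ S ∈ Sig, x ∉ interior S}

/-- The path metric `d_S` of `X_S`: infimum of lengths of paths in `X` avoiding the interiors
of all members of `Σ'` (`∞` if there is no such path). -/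
def dS (Sig : Set (Set X)) (x y : X) : ℝ≥0∞ :=
  ⨅ (γ : ℝ → X) (b : ℝ) (_ : 0 ≤ b) (_ : ContinuousOn γ (Set.Icc 0 b))
    (_ : γ 0 = x) (_ : γ b = y) (_ : ∀ t ∈ Set.Icc 0 b, γ t ∈ XSset Sig),
    eVariationOn γ (Set.Icc 0 b)

/-- The path pseudometric `d̂` of the quotient `X̂` of `X_S` in which all the points of any
one boundary component `∂S` (`S ∈ Σ'`) are identified: a chain may jump for free between two
points lying on the boundary of the same `S ∈ Σ'`. -/
def dHat (Sig : Set (Set X)) (x y : X) : ℝ≥0∞ :=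
  ⨅ (n : ℕ) (a : Fin (n + 1) → X) (b : Fin (n + 1) → X) (_ : a 0 = x) (_ : b (Fin.last n) = y)
    (_ : ∀ i : Fin n, ∃ S ∈ Sig, b i.castSucc ∈ frontier S ∧ a i.succ ∈ frontier S),
    ∑ i : Fin (n + 1), dS Sig (a i) (b i)

/-- The length (total variation) of the path `f` on the set `s`, measured with respect to an
arbitrary `ℝ≥0∞`-valued (pseudo)distance `ρ`. Used to measure lengths in `X̂`. -/
def varWith (ρ : X → X → ℝ≥0∞) (f : ℝ → X) (s : Set ℝ) : ℝ≥0∞ :=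
  ⨆ p : ℕ × { u : ℕ → ℝ // Monotone u ∧ ∀ i, u i ∈ s },
    ∑ i ∈ Finset.range p.1, ρ (f (p.2.1 i)) (f (p.2.1 (i + 1)))

/-- The path `γ` (defined on `s`), or its image `γ̂` in `X̂`, *intersects* `S`: it meets the
boundary of `S` and travels a nonzero `X`-distance in the interior of `S`. -/
def PathIntersects (γ : ℝ → X) (s : Set ℝ) (S : Set X) : Prop :=
  (∃ t ∈ s, γ t ∈ frontier S) ∧ 0 < eVariationOn γ {t ∈ s | γ t ∈ interior S}

/-- The image `γ̂` in `X̂` of the path `γ : [0,b] → X` is a `P`-quasigeodesic of `(X̂, d̂)`: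
every subpath has `d̂`-length at most `P` times the `d̂`-distance between its endpoints,
plus `P`. -/
def HatQuasigeodesic (Sig : Set (Set X)) (P : ℝ) (γ : ℝ → X) (b : ℝ) : Prop :=
  0 ≤ b ∧ ContinuousOn γ (Set.Icc 0 b) ∧
    ∀ s ∈ Set.Icc 0 b, ∀ t ∈ Set.Icc 0 b, s ≤ t →
      varWith (dHat Sig) γ (Set.Icc s t) ≤
        ENNReal.ofReal P * dHat Sig (γ s) (γ t) + ENNReal.ofReal P

/-- The image `α̂` in `X̂` of the path `α : [0,b] → X` is a geodesic of `(X̂, d̂)`: every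
subpath realizes the `d̂`-distance between its endpoints. -/
def HatGeodesic (Sig : Set (Set X)) (α : ℝ → X) (b : ℝ) : Prop :=
  0 ≤ b ∧ ContinuousOn α (Set.Icc 0 b) ∧
    ∀ s ∈ Set.Icc 0 b, ∀ t ∈ Set.Icc 0 b, s ≤ t →
      varWith (dHat Sig) α (Set.Icc s t) = dHat Sig (α s) (α t)

/-- The path `γ : [0,b] → X` is without backtracking: it never returns to a member of `Σ'`
after leaving it. -/
def NoBacktracking (Sig : Set (Set X)) (γ : ℝ → X) (b : ℝ) : Prop :=
  ∀ S ∈ Sig, ∀ s ∈ Set.Icc 0 b, ∀ t ∈ Set.Icc 0 b, ∀ u ∈ Set.Icc 0 b,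
    s ≤ t → t ≤ u → γ s ∈ S → γ u ∈ S → γ t ∈ S

end

section SdistanceHelpers

variable {X : Type*} [MetricSpace X]

namespace IsGeodesicFrom

variable {γ : ℝ → X} {x y : X}

theorem dist_map (h : IsGeodesicFrom γ x y) {s t : ℝ}
    (hs : s ∈ Set.Icc 0 (dist x y)) (ht : t ∈ Set.Icc 0 (dist x y)) :
    dist (γ s) (γ t) = |s - t| := h.2.2 s hs t ht

theorem dist_start (h : IsGeodesicFrom γ x y) {t : ℝ} (ht : t ∈ Set.Icc 0 (dist x y)) :
    dist x (γ t) = t := by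
  have h0 := h.2.2 0 ⟨le_rfl, dist_nonneg⟩ t ht
  rw [h.1] at h0
  rw [h0, zero_sub, abs_neg, abs_of_nonneg ht.1]

theorem dist_end (h : IsGeodesicFrom γ x y) {t : ℝ} (ht : t ∈ Set.Icc 0 (dist x y)) :
    dist (γ t) y = dist x y - t := by
  have h0 := h.2.2 t ht (dist x y) ⟨dist_nonneg, le_rfl⟩
  rw [h.2.1] at h0
  rw [h0, abs_of_nonpos (by linarith [ht.2]), neg_sub]

theorem infDist_map {S : Set X} (h : IsGeodesicFrom γ x y) (hy : y ∈ S)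
    (hd : dist x y = Metric.infDist x S) {t : ℝ} (ht : t ∈ Set.Icc 0 (dist x y)) :
    Metric.infDist (γ t) S = dist x y - t := by
  refine le_antisymm ?_ ?_
  · rw [← h.dist_end ht]
    exact Metric.infDist_le_dist_of_mem hy
  · by_contra hlt
    push_neg at hlt
    obtain ⟨w, hw, hdw⟩ := (Metric.infDist_lt_iff ⟨y, hy⟩).1 hlt
    have h1 : Metric.infDist x S ≤ dist x w := Metric.infDist_le_dist_of_mem hw
    have h2 : dist x w ≤ dist x (γ t) + dist (γ t) w := dist_triangle _ _ _
    rw [h.dist_start ht] at h2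
    linarith [hd ▸ h1]

theorem restrict (h : IsGeodesicFrom γ x y) {c : ℝ} (hc : c ∈ Set.Icc 0 (dist x y)) :
    IsGeodesicFrom γ x (γ c) := by
  have hxc : dist x (γ c) = c := h.dist_start hc
  refine ⟨h.1, by rw [hxc], ?_⟩
  intro s hs t ht
  rw [hxc] at hs ht
  exact h.2.2 s ⟨hs.1, hs.2.trans hc.2⟩ t ⟨ht.1, ht.2.trans hc.2⟩

theorem reverseFrom (h : IsGeodesicFrom γ x y) {c : ℝ} (hc : c ∈ Set.Icc 0 (dist x y)) :
    IsGeodesicFrom (fun s => γ (c - s)) (γ c) x := by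
  have hxc : dist (γ c) x = c := by rw [dist_comm]; exact h.dist_start hc
  refine ⟨by simp, ?_, ?_⟩
  · rw [hxc]
    show γ (c - c) = x
    rw [sub_self, h.1]
  · intro s hs t ht
    rw [hxc] at hs ht
    have h1 : c - s ∈ Set.Icc 0 (dist x y) := ⟨by linarith [hs.2], by linarith [hs.1, hc.2]⟩
    have h2 : c - t ∈ Set.Icc 0 (dist x y) := ⟨by linarith [ht.2], by linarith [ht.1, hc.2]⟩
    rw [h.2.2 _ h1 _ h2, show c - s - (c - t) = t - s from by ring, abs_sub_comm]

end IsGeodesicFrom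

theorem mem_cthickening_of_infDist_le' {S : Set X} (hne : S.Nonempty) {x : X} {r : ℝ}
    (hr : 0 ≤ r) (h : Metric.infDist x S ≤ r) : x ∈ Metric.cthickening r S := by
  rw [Metric.mem_cthickening_iff]
  exact (ENNReal.le_ofReal_iff_toReal_le (Metric.infEdist_ne_top hne) hr).2 h

theorem proj_notMem_interior {S : Set X} {x p : X} (hp : p ∈ S)
    (hd : dist x p = Metric.infDist x S) (hpos : 0 < dist x p)
    {γ : ℝ → X} (hγ : IsGeodesicFrom γ x p) : p ∉ interior S := by
  have hcl : p ∈ closure Sᶜ := by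
    rw [Metric.mem_closure_iff]
    intro r hr
    have hm0 : 0 < min (r / 2) (dist x p) := lt_min (by linarith) hpos
    have hmle : min (r / 2) (dist x p) ≤ dist x p := min_le_right _ _
    have harg : dist x p - min (r / 2) (dist x p) ∈ Set.Icc 0 (dist x p) :=
      ⟨by linarith, by linarith⟩
    refine ⟨γ (dist x p - min (r / 2) (dist x p)), ?_, ?_⟩
    · intro hmem
      have hinf := hγ.infDist_map hp hd harg
      rw [Metric.infDist_zero_of_mem hmem] at hinf
      have : dist x p - (dist x p - min (r / 2) (dist x p)) = min (r / 2) (dist x p) := by ring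
      rw [this] at hinf
      linarith
    · have := hγ.dist_map (s := dist x p) ⟨dist_nonneg, le_rfl⟩ harg
      rw [hγ.2.1] at this
      rw [this, show dist x p - (dist x p - min (r / 2) (dist x p)) = min (r / 2) (dist x p)
        from by ring, abs_of_nonneg (le_of_lt hm0)]
      have : min (r / 2) (dist x p) ≤ r / 2 := min_le_left _ _
      linarith
  rw [closure_compl] at hcl
  exact hcl

theorem evar_le_of_lip' {f : ℝ → X} {b : ℝ}
    (hf : ∀ s ∈ Set.Icc (0:ℝ) b, ∀ t ∈ Set.Icc (0:ℝ) b, dist (f s) (f t) ≤ |s - t|) :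
    eVariationOn f (Set.Icc 0 b) ≤ ENNReal.ofReal b := by
  refine iSup_le ?_
  rintro ⟨n, u, hu, hus⟩
  calc ∑ i ∈ Finset.range n, edist (f (u (i + 1))) (f (u i))
      ≤ ∑ i ∈ Finset.range n, ENNReal.ofReal (u (i + 1) - u i) := by
        refine Finset.sum_le_sum fun i _ => ?_
        rw [edist_dist]
        refine ENNReal.ofReal_le_ofReal ?_
        have h1 := hf _ (hus (i + 1)) _ (hus i)
        rwa [abs_of_nonneg (by linarith [hu (Nat.le_succ i)] : (0:ℝ) ≤ u (i + 1) - u i)] at h1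
    _ = ENNReal.ofReal (∑ i ∈ Finset.range n, (u (i + 1) - u i)) := by
        rw [ENNReal.ofReal_sum_of_nonneg]
        intro i _
        linarith [hu (Nat.le_succ i)]
    _ ≤ ENNReal.ofReal b := by
        rw [Finset.sum_range_sub]
        exact ENNReal.ofReal_le_ofReal (by linarith [(hus 0).1, (hus n).2])

end SdistanceHelpers

theorem proj_dist_le_six_delta {X : Type*} [MetricSpace X]
    (hgeo : GeodesicSpace X) {δ : ℝ} (hδ : 0 ≤ δ) (hhyp : DeltaHyperbolic X δ)
    {S : Set X} (hconvS : GeodConvex S)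
    {x y : X} {β : ℝ → X} (hβ : IsGeodesicFrom β x y)
    (hfar : ∀ t ∈ Set.Icc 0 (dist x y), β t ∉ Metric.cthickening (2 * δ) S)
    {px py : X} (hpx : px ∈ S) (hpxd : dist x px = Metric.infDist x S)
    (hpy : py ∈ S) (hpyd : dist y py = Metric.infDist y S) :
    dist px py ≤ 6 * δ := by
  obtain ⟨α, hα⟩ := hgeo x px
  obtain ⟨α', hα'⟩ := hgeo y py
  obtain ⟨τ, hτ⟩ := hgeo x py
  obtain ⟨σ, hσ⟩ := hgeo px py
  have hSne : S.Nonempty := ⟨px, hpx⟩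
  have h2δ : (0:ℝ) ≤ 2 * δ := by linarith
  have hrev : IsGeodesicFrom (fun s => α (dist x px - s)) px x := by
    have h0 := hα.reverseFrom (c := dist x px) ⟨dist_nonneg, le_rfl⟩
    rwa [hα.2.1] at h0
  have key : ∀ t ∈ Set.Icc 0 (dist px py),
      dist (σ t) px ≤ 2 * δ ∨ dist (σ t) py ≤ 4 * δ := by
    intro t ht
    have hmS : σ t ∈ S := hconvS px hpx py hpy σ hσ t ht
    obtain ⟨p, hp, hdp⟩ := hhyp px x py (fun s => α (dist x px - s)) τ σ hrev hτ hσ t ht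
    rcases hp with hp | hp
    · obtain ⟨s, hs, rfl⟩ := hp
      left
      rw [dist_comm px x] at hs
      have harg : dist x px - s ∈ Set.Icc 0 (dist x px) :=
        ⟨by linarith [hs.2], by linarith [hs.1]⟩
      have hinf : Metric.infDist (α (dist x px - s)) S = s := by
        rw [hα.infDist_map hpx hpxd harg]; ring
      have h1 : Metric.infDist (α (dist x px - s)) S ≤ dist (α (dist x px - s)) (σ t) :=
        Metric.infDist_le_dist_of_mem hmS
      rw [hinf, dist_comm] at h1
      have hs_le : s ≤ δ := h1.trans hdp
      have hppx : dist (α (dist x px - s)) px = s := by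
        have h2 := hα.dist_map harg (t := dist x px) ⟨dist_nonneg, le_rfl⟩
        rw [hα.2.1] at h2
        rw [h2, show dist x px - s - dist x px = -s from by ring, abs_neg,
          abs_of_nonneg hs.1]
      calc dist (σ t) px ≤ dist (σ t) (α (dist x px - s)) + dist (α (dist x px - s)) px :=
            dist_triangle _ _ _
        _ ≤ δ + s := by rw [hppx]; linarith [hdp]
        _ ≤ 2 * δ := by linarith
    · obtain ⟨r, hr, rfl⟩ := hp
      obtain ⟨q, hq, hdq⟩ := hhyp x y py β α' τ hβ hα' hτ r hr
      rcases hq with hq | hq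
      · obtain ⟨s, hs, rfl⟩ := hq
        exfalso
        have h1 : Metric.infDist (β s) S ≤ dist (β s) (σ t) :=
          Metric.infDist_le_dist_of_mem hmS
        have h2 : dist (β s) (σ t) ≤ dist (β s) (τ r) + dist (τ r) (σ t) := dist_triangle _ _ _
        rw [dist_comm (β s) (τ r)] at h2
        rw [dist_comm (τ r) (σ t)] at h2
        have h3 : Metric.infDist (β s) S ≤ 2 * δ := by linarith [hdp, hdq]
        exact hfar s hs (mem_cthickening_of_infDist_le' hSne h2δ h3)
      · obtain ⟨s, hs, rfl⟩ := hq
        right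
        have hinfq : Metric.infDist (α' s) S = dist y py - s := hα'.infDist_map hpy hpyd hs
        have hqpy : dist (α' s) py = dist y py - s := hα'.dist_end hs
        have h1 : Metric.infDist (α' s) S ≤ dist (α' s) (σ t) :=
          Metric.infDist_le_dist_of_mem hmS
        have h2 : dist (α' s) (σ t) ≤ dist (α' s) (τ r) + dist (τ r) (σ t) := dist_triangle _ _ _
        rw [dist_comm (α' s) (τ r)] at h2
        rw [dist_comm (τ r) (σ t)] at h2
        have h3 : dist y py - s ≤ 2 * δ := by rw [← hinfq]; linarith [hdp, hdq]
        calc dist (σ t) py ≤ dist (σ t) (τ r) + dist (τ r) (α' s) + dist (α' s) py :=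
              dist_triangle4 _ _ _ _
          _ ≤ δ + δ + (dist y py - s) := by rw [hqpy]; linarith [hdp, hdq]
          _ ≤ 4 * δ := by linarith
  have hA0 : (0:ℝ) ∈ {t : ℝ | t ∈ Set.Icc 0 (dist px py) ∧ dist (σ t) px ≤ 2 * δ} := by
    refine ⟨⟨le_rfl, dist_nonneg⟩, ?_⟩
    rw [hσ.1, dist_self]
    linarith
  set A : Set ℝ := {t : ℝ | t ∈ Set.Icc 0 (dist px py) ∧ dist (σ t) px ≤ 2 * δ} with hA
  have hAne : A.Nonempty := ⟨0, hA0⟩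
  have hbdd : BddAbove A := ⟨dist px py, fun t ht => ht.1.2⟩
  set T := sSup A with hT
  have hT0 : 0 ≤ T := le_csSup hbdd hA0
  have hTD : T ≤ dist px py := csSup_le hAne fun t ht => ht.1.2
  have hTIcc : T ∈ Set.Icc 0 (dist px py) := ⟨hT0, hTD⟩
  have hc1 : dist (σ T) px ≤ 2 * δ := by
    refine le_of_forall_pos_le_add fun η hη => ?_
    obtain ⟨a, ha, hlta⟩ := exists_lt_of_lt_csSup hAne (show T - η < T from by linarith)
    have haT : a ≤ T := le_csSup hbdd ha
    have hdTa : dist (σ T) (σ a) = T - a := by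
      rw [hσ.dist_map hTIcc ha.1, abs_of_nonneg (by linarith)]
    calc dist (σ T) px ≤ dist (σ T) (σ a) + dist (σ a) px := dist_triangle _ _ _
      _ ≤ (T - a) + 2 * δ := by rw [hdTa]; linarith [ha.2]
      _ ≤ 2 * δ + η := by linarith
  have hc2 : dist (σ T) py ≤ 4 * δ := by
    rcases eq_or_lt_of_le hTD with hTD' | hTD'
    · rw [hTD', hσ.2.1, dist_self]
      linarith
    · refine le_of_forall_pos_le_add fun η hη => ?_
      have htT : T < min (T + η) (dist px py) := lt_min (by linarith) hTD'
      have htIcc : min (T + η) (dist px py) ∈ Set.Icc 0 (dist px py) :=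
        ⟨by linarith, min_le_right _ _⟩
      have htA : min (T + η) (dist px py) ∉ A := fun hmem =>
        absurd (le_csSup hbdd hmem) (not_le.2 htT)
      have h4 : dist (σ (min (T + η) (dist px py))) py ≤ 4 * δ := by
        rcases key _ htIcc with h | h
        · exact absurd (⟨htIcc, h⟩ : min (T + η) (dist px py) ∈ A) htA
        · exact h
      have hdTt : dist (σ T) (σ (min (T + η) (dist px py))) = min (T + η) (dist px py) - T := by
        rw [hσ.dist_map hTIcc htIcc, abs_of_nonpos (by linarith), neg_sub]
      calc dist (σ T) py ≤ dist (σ T) (σ (min (T + η) (dist px py)))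
            + dist (σ (min (T + η) (dist px py))) py := dist_triangle _ _ _
        _ ≤ (min (T + η) (dist px py) - T) + 4 * δ := by rw [hdTt]; linarith
        _ ≤ 4 * δ + η := by linarith [min_le_left (T + η) (dist px py)]
  calc dist px py ≤ dist px (σ T) + dist (σ T) py := dist_triangle _ _ _
    _ ≤ 2 * δ + 4 * δ := by rw [dist_comm px (σ T)]; linarith
    _ = 6 * δ := by ring

/-- Lemma `Sdistance`. Let `S ∈ Σ'` and let `β` be an `X`-geodesic with
endpoints `x`, `y` which does not intersect the closed `2δ`-neighborhood of `S`. Then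
`d_S(Pr(x,S), Pr(y,S)) ≤ C + 16δ` where `C = 2ε + 12δ`; in particular there is a path in `X`
avoiding the interior of `S`, joining the two projections, of length at most `C + 16δ`. -/
theorem projections_close_in_dS
    {X : Type*} [MetricSpace X] [CompleteSpace X] [LocallyCompactSpace X]
    (hgeo : GeodesicSpace X) (δ ε R : ℝ) (hδ : 0 ≤ δ) (hε : 0 ≤ ε)
    (hhyp : DeltaHyperbolic X δ) (Sig : Set (Set X)) (hSig : SigmaSystem Sig ε R)
    (hconv : ∀ S ∈ Sig, GeodConvex S) (hR : 24 * δ + 4 * ε < R)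
    (S : Set X) (hS : S ∈ Sig)
    (x y : X) (β : ℝ → X) (hβ : IsGeodesicFrom β x y)
    (hfar : ∀ t ∈ Set.Icc 0 (dist x y), β t ∉ Metric.cthickening (2 * δ) S)
    (px py : X)
    (hpx : px ∈ S) (hpxd : dist x px = Metric.infDist x S)
    (hpy : py ∈ S) (hpyd : dist y py = Metric.infDist y S) :
    dS Sig px py ≤ ENNReal.ofReal ((2 * ε + 12 * δ) + 16 * δ) ∧
      ∃ (γ : ℝ → X) (b : ℝ), 0 ≤ b ∧ ContinuousOn γ (Set.Icc 0 b) ∧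
        γ 0 = px ∧ γ b = py ∧ (∀ t ∈ Set.Icc 0 b, γ t ∉ interior S) ∧
        eVariationOn γ (Set.Icc 0 b) ≤ ENNReal.ofReal ((2 * ε + 12 * δ) + 16 * δ) := by
  
  have hSne : S.Nonempty := ⟨px, hpx⟩
  have hconvS := hconv S hS
  obtain ⟨α, hα⟩ := hgeo x px
  obtain ⟨α', hα'⟩ := hgeo y py
  have hD : dist px py ≤ 6 * δ :=
    proj_dist_le_six_delta hgeo hδ hhyp hconvS hβ hfar hpx hpxd hpy hpyd
  have h2x : 2 * δ < dist x px := by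
    have h0 : β 0 ∉ Metric.cthickening (2 * δ) S := hfar 0 ⟨le_rfl, dist_nonneg⟩
    rw [hβ.1] at h0
    by_contra hle
    push_neg at hle
    exact h0 (mem_cthickening_of_infDist_le' hSne (by linarith)
      (by rw [← hpxd]; exact hle))
  have h2y : 2 * δ < dist y py := by
    have h0 : β (dist x y) ∉ Metric.cthickening (2 * δ) S :=
      hfar (dist x y) ⟨dist_nonneg, le_rfl⟩
    rw [hβ.2.1] at h0
    by_contra hle
    push_neg at hle
    exact h0 (mem_cthickening_of_infDist_le' hSne (by linarith)
      (by rw [← hpyd]; exact hle))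
  have hpxint : px ∉ interior S := proj_notMem_interior hpx hpxd (by linarith) hα
  have hpyint : py ∉ interior S := proj_notMem_interior hpy hpyd (by linarith) hα'
  have main : ∃ (γp : ℝ → X) (b : ℝ), 0 ≤ b ∧
      (∀ s ∈ Set.Icc 0 b, ∀ t ∈ Set.Icc 0 b, dist (γp s) (γp t) ≤ |s - t|) ∧
      γp 0 = px ∧ γp b = py ∧ (∀ t ∈ Set.Icc 0 b, ∀ T ∈ Sig, γp t ∉ interior T) ∧
      b ≤ 2 * ε + 28 * δ := by
    rcases eq_or_lt_of_le hδ with hδ0 | hδ0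
    · -- degenerate case δ = 0
      have hpxpy : px = py := dist_le_zero.1 (by linarith)
      refine ⟨fun _ => px, 0, le_rfl, ?_, rfl, by simpa using hpxpy, ?_, by linarith⟩
      · intro s _ t _
        rw [dist_self]
        positivity
      · intro t _ T hT hint
        by_cases hTS : T = S
        · exact hpxint (hTS ▸ hint)
        · have hdis := hSig.disjoint S hS T hT fun hh => hTS hh.symm
          exact (Set.disjoint_left.1 hdis hpx) (interior_subset hint)
    · -- main case δ > 0
      set Hx := dist x px with hHx
      set Hy := dist y py with hHy
      set h := min (min Hx Hy) (3 * δ) with hh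
      have hh2 : 2 * δ < h := lt_min (lt_min h2x h2y) (by linarith)
      have hh0 : 0 < h := by linarith
      have hhx : h ≤ Hx := (min_le_left _ _).trans (min_le_left _ _)
      have hhy : h ≤ Hy := (min_le_left _ _).trans (min_le_right _ _)
      have hh3 : h ≤ 3 * δ := min_le_right _ _
      set u := α (Hx - h) with hu
      set v := α' (Hy - h) with hv
      have hargu : Hx - h ∈ Set.Icc 0 Hx := ⟨by linarith, by linarith⟩
      have hargv : Hy - h ∈ Set.Icc 0 Hy := ⟨by linarith, by linarith⟩
      have hupx : dist u px = h := by rw [hu, hα.dist_end hargu]; ring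
      have hvpy : dist v py = h := by rw [hv, hα'.dist_end hargv]; ring
      obtain ⟨g, hg⟩ := hgeo u v
      set L := dist u v with hL
      have hL0 : 0 ≤ L := dist_nonneg
      have hLle : L ≤ 2 * h + 6 * δ := by
        calc L ≤ dist u px + dist px py + dist py v := dist_triangle4 _ _ _ _
          _ ≤ h + 6 * δ + h := by rw [hupx, dist_comm py v, hvpy]; linarith
          _ = 2 * h + 6 * δ := by ring
      obtain ⟨τ₂, hτ₂⟩ := hgeo u y
      have hrevu : IsGeodesicFrom (fun s => α (Hx - h - s)) u x := hα.reverseFrom hargu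
      have hα'v : IsGeodesicFrom α' y v := hα'.restrict hargv
      have hdux : dist u x = Hx - h := by rw [hu, dist_comm]; exact hα.dist_start hargu
      have hdyv : dist y v = Hy - h := by rw [hv]; exact hα'.dist_start hargv
      have hmid : ∀ a ∈ Set.Icc 0 L, g a ∉ S := by
        intro a ha hwS
        obtain ⟨p, hp, hdp⟩ := hhyp u y v τ₂ α' g hτ₂ hα'v hg a ha
        rcases hp with hp | hp
        · obtain ⟨r, hr, rfl⟩ := hp
          obtain ⟨q, hq, hdq⟩ :=
            hhyp u x y (fun s => α (Hx - h - s)) β τ₂ hrevu hβ hτ₂ r hr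
          rcases hq with hq | hq
          · obtain ⟨s, hs, rfl⟩ := hq
            rw [hdux] at hs
            have hargq : Hx - h - s ∈ Set.Icc 0 Hx := ⟨by linarith [hs.2], by linarith [hs.1]⟩
            have hinfq : Metric.infDist (α (Hx - h - s)) S = h + s := by
              rw [hα.infDist_map hpx hpxd hargq]; ring
            have h1 : Metric.infDist (α (Hx - h - s)) S ≤ dist (α (Hx - h - s)) (g a) :=
              Metric.infDist_le_dist_of_mem hwS
            have h2 : dist (α (Hx - h - s)) (g a)
                ≤ dist (α (Hx - h - s)) (τ₂ r) + dist (τ₂ r) (g a) := dist_triangle _ _ _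
            rw [dist_comm (α (Hx - h - s)) (τ₂ r)] at h2
            rw [dist_comm (τ₂ r) (g a)] at h2
            rw [hinfq] at h1
            linarith [hs.1, hdp, hdq]
          · obtain ⟨s, hs, rfl⟩ := hq
            have h1 : Metric.infDist (β s) S ≤ dist (β s) (g a) :=
              Metric.infDist_le_dist_of_mem hwS
            have h2 : dist (β s) (g a) ≤ dist (β s) (τ₂ r) + dist (τ₂ r) (g a) :=
              dist_triangle _ _ _
            rw [dist_comm (β s) (τ₂ r)] at h2
            rw [dist_comm (τ₂ r) (g a)] at h2
            exact hfar s hs (mem_cthickening_of_infDist_le' hSne (by linarith)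
              (by linarith [hdp, hdq]))
        · obtain ⟨s, hs, rfl⟩ := hp
          rw [hdyv] at hs
          have hs' : s ∈ Set.Icc 0 Hy := ⟨hs.1, by linarith [hs.2]⟩
          have hinfp : Metric.infDist (α' s) S = Hy - s := hα'.infDist_map hpy hpyd hs'
          have h1 : Metric.infDist (α' s) S ≤ dist (α' s) (g a) :=
            Metric.infDist_le_dist_of_mem hwS
          rw [dist_comm (α' s) (g a)] at h1
          rw [hinfp] at h1
          linarith [hs.2, hdp]
      set b := h + L + h with hb
      have hb0 : (0:ℝ) ≤ b := by positivity
      set γp : ℝ → X :=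
        fun t => if t < h then α (Hx - t) else if t ≤ h + L then g (t - h)
          else α' (Hy - (b - t)) with hγp
      have hval1 : ∀ t : ℝ, t < h → γp t = α (Hx - t) := by
        intro t h1
        simp only [hγp]
        rw [if_pos h1]
      have hval2 : ∀ t : ℝ, h ≤ t → t ≤ h + L → γp t = g (t - h) := by
        intro t h0' h1
        simp only [hγp]
        rw [if_neg (not_lt.2 h0'), if_pos h1]
      have hval3 : ∀ t : ℝ, h + L < t → γp t = α' (Hy - (b - t)) := by
        intro t h1
        simp only [hγp]
        rw [if_neg (by push_neg; nlinarith : ¬ t < h), if_neg (not_le.2 h1)]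
      have hγp0 : γp 0 = px := by
        rw [hval1 0 hh0, sub_zero]
        exact hα.2.1
      have hγpb : γp b = py := by
        rw [hval3 b (by rw [hb]; linarith), sub_self, sub_zero]
        exact hα'.2.1
      -- distance computations for the pieces
      have hαd : ∀ r r' : ℝ, 0 ≤ r → r ≤ h → 0 ≤ r' → r' ≤ h →
          dist (α (Hx - r)) (α (Hx - r')) = |r' - r| := by
        intro r r' h1 h2 h3 h4
        rw [hα.dist_map ⟨by linarith, by linarith⟩ ⟨by linarith, by linarith⟩,
          show Hx - r - (Hx - r') = r' - r from by ring]
      have hα'd : ∀ r r' : ℝ, 0 ≤ r → r ≤ h → 0 ≤ r' → r' ≤ h →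
          dist (α' (Hy - r)) (α' (Hy - r')) = |r' - r| := by
        intro r r' h1 h2 h3 h4
        rw [hα'.dist_map ⟨by linarith, by linarith⟩ ⟨by linarith, by linarith⟩,
          show Hy - r - (Hy - r') = r' - r from by ring]
      have hgd : ∀ r r' : ℝ, r ∈ Set.Icc 0 L → r' ∈ Set.Icc 0 L →
          dist (g r) (g r') = |r - r'| := fun r r' h1 h2 => hg.dist_map h1 h2
      have key2 : ∀ s t : ℝ, 0 ≤ s → s ≤ t → t ≤ b → dist (γp s) (γp t) ≤ t - s := by
        intro s t hs0 hst htb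
        rcases lt_or_ge s h with hs1 | hs1
        · rcases lt_or_ge t h with ht1 | ht1
          · rw [hval1 s hs1, hval1 t ht1, hαd s t hs0 (le_of_lt hs1) (by linarith)
              (le_of_lt ht1), abs_of_nonneg (by linarith)]
          · rcases le_or_gt t (h + L) with ht2 | ht2
            · have e1 : dist (α (Hx - s)) u = h - s := by
                rw [hu, hαd s h hs0 (le_of_lt hs1) (by linarith) le_rfl,
                  abs_of_nonneg (by linarith)]
              have e2 : dist u (g (t - h)) = t - h := by
                rw [← hg.1]
                rw [hgd 0 (t - h) ⟨le_rfl, hL0⟩ ⟨by linarith, by linarith⟩,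
                  show (0:ℝ) - (t - h) = -(t - h) from by ring, abs_neg,
                  abs_of_nonneg (by linarith)]
              calc dist (γp s) (γp t) = dist (α (Hx - s)) (g (t - h)) := by
                    rw [hval1 s hs1, hval2 t ht1 ht2]
                _ ≤ dist (α (Hx - s)) u + dist u (g (t - h)) := dist_triangle _ _ _
                _ = t - s := by rw [e1, e2]; ring
            · have hbt : 0 ≤ b - t := by linarith
              have hbt2 : b - t < h := by rw [hb]; linarith
              have e1 : dist (α (Hx - s)) u = h - s := by
                rw [hu, hαd s h hs0 (le_of_lt hs1) (by linarith) le_rfl,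
                  abs_of_nonneg (by linarith)]
              have e3 : dist v (α' (Hy - (b - t))) = h - (b - t) := by
                rw [hv, hα'd h (b - t) (by linarith) le_rfl hbt (le_of_lt hbt2),
                  abs_of_nonpos (by linarith), neg_sub]
              calc dist (γp s) (γp t) = dist (α (Hx - s)) (α' (Hy - (b - t))) := by
                    rw [hval1 s hs1, hval3 t ht2]
                _ ≤ dist (α (Hx - s)) u + dist u v + dist v (α' (Hy - (b - t))) :=
                    dist_triangle4 _ _ _ _
                _ = (h - s) + L + (h - (b - t)) := by rw [e1, e3, ← hL]
                _ = t - s := by rw [hb]; ring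
        · rcases le_or_gt s (h + L) with hs2 | hs2
          · rcases le_or_gt t (h + L) with ht2 | ht2
            · rw [hval2 s hs1 hs2, hval2 t (by linarith) ht2,
                hgd (s - h) (t - h) ⟨by linarith, by linarith⟩ ⟨by linarith, by linarith⟩,
                abs_of_nonpos (by linarith), show -(s - h - (t - h)) = t - s from by ring]
            · have hbt : 0 ≤ b - t := by linarith
              have hbt2 : b - t < h := by rw [hb]; linarith
              have e2 : dist (g (s - h)) v = L - (s - h) := by
                rw [← hg.2.1, ← hL]
                rw [hgd (s - h) L ⟨by linarith, by linarith⟩ ⟨hL0, le_rfl⟩,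
                  abs_of_nonpos (by linarith), neg_sub]
              have e3 : dist v (α' (Hy - (b - t))) = h - (b - t) := by
                rw [hv, hα'd h (b - t) (by linarith) le_rfl hbt (le_of_lt hbt2),
                  abs_of_nonpos (by linarith), neg_sub]
              calc dist (γp s) (γp t) = dist (g (s - h)) (α' (Hy - (b - t))) := by
                    rw [hval2 s hs1 hs2, hval3 t ht2]
                _ ≤ dist (g (s - h)) v + dist v (α' (Hy - (b - t))) := dist_triangle _ _ _
                _ = (L - (s - h)) + (h - (b - t)) := by rw [e2, e3]
                _ = t - s := by rw [hb]; ring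
          · have ht2 : h + L < t := by linarith
            have hbs : 0 ≤ b - s := by linarith
            have hbs2 : b - s < h := by rw [hb]; linarith
            have hbt : 0 ≤ b - t := by linarith
            have hbt2 : b - t < h := by rw [hb]; linarith
            rw [hval3 s hs2, hval3 t ht2,
              hα'd (b - s) (b - t) hbs (le_of_lt hbs2) hbt (le_of_lt hbt2),
              show b - t - (b - s) = s - t from by ring, abs_of_nonpos (by linarith),
              neg_sub]
      have hlip : ∀ s ∈ Set.Icc (0:ℝ) b, ∀ t ∈ Set.Icc (0:ℝ) b,
          dist (γp s) (γp t) ≤ |s - t| := by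
        intro s hs t ht
        rcases le_total s t with hst | hst
        · rw [abs_of_nonpos (by linarith), neg_sub]
          exact key2 s t hs.1 hst ht.2
        · rw [dist_comm, abs_of_nonneg (by linarith)]
          exact key2 t s ht.1 hst hs.2
      have hbound : b ≤ 18 * δ := by rw [hb]; linarith
      have hmem : ∀ t ∈ Set.Icc (0:ℝ) b, ∀ T ∈ Sig, γp t ∉ interior T := by
        intro t ht T hT hint
        by_cases hTS : T = S
        · rw [hTS] at hint
          rcases lt_or_ge t h with h1 | h1
          · rw [hval1 t h1] at hint
            rcases eq_or_lt_of_le ht.1 with h0 | h0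
            · rw [← h0, sub_zero] at hint
              exact hpxint (by rwa [hα.2.1] at hint)
            · have harg' : Hx - t ∈ Set.Icc 0 Hx := ⟨by linarith, by linarith⟩
              have hinf : Metric.infDist (α (Hx - t)) S = t := by
                rw [hα.infDist_map hpx hpxd harg']; ring
              have hnot : α (Hx - t) ∉ S := fun hmem' => by
                rw [Metric.infDist_zero_of_mem hmem'] at hinf
                linarith
              exact hnot (interior_subset hint)
          · rcases le_or_gt t (h + L) with h2 | h2
            · rw [hval2 t h1 h2] at hint
              exact hmid (t - h) ⟨by linarith, by linarith⟩ (interior_subset hint)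
            · rw [hval3 t h2] at hint
              rcases eq_or_lt_of_le ht.2 with hb' | hb'
              · rw [hb', sub_self, sub_zero] at hint
                exact hpyint (by rwa [hα'.2.1] at hint)
              · have hbt : 0 < b - t := by linarith
                have hbt2 : b - t < h := by rw [hb]; linarith
                have harg' : Hy - (b - t) ∈ Set.Icc 0 Hy := ⟨by linarith, by linarith⟩
                have hinf : Metric.infDist (α' (Hy - (b - t))) S = b - t := by
                  rw [hα'.infDist_map hpy hpyd harg']; ring
                have hnot : α' (Hy - (b - t)) ∉ S := fun hmem' => by
                  rw [Metric.infDist_zero_of_mem hmem'] at hinf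
                  linarith
                exact hnot (interior_subset hint)
        · have hmemT : γp t ∈ T := interior_subset hint
          have hfarRT := hSig.far S hS T hT (fun hh => hTS hh.symm) px hpx (γp t) hmemT
          have hdist : dist px (γp t) ≤ t := by
            have h5 := hlip 0 ⟨le_rfl, hb0⟩ t ht
            rw [hγp0] at h5
            rwa [zero_sub, abs_neg, abs_of_nonneg ht.1] at h5
          linarith [ht.2]
      exact ⟨γp, b, hb0, hlip, hγp0, hγpb, hmem, by linarith⟩
  obtain ⟨γp, b, hb0, hlip, hγ0, hγb, hmem, hble⟩ := main
  have hcont : ContinuousOn γp (Set.Icc 0 b) := by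
    have hl : LipschitzOnWith 1 γp (Set.Icc 0 b) := by
      rw [lipschitzOnWith_iff_dist_le_mul]
      intro s hs t ht
      rw [NNReal.coe_one, one_mul, Real.dist_eq]
      exact hlip s hs t ht
    exact hl.continuousOn
  have hXS : ∀ t ∈ Set.Icc (0:ℝ) b, γp t ∈ XSset Sig := fun t ht T hT => hmem t ht T hT
  have hevar : eVariationOn γp (Set.Icc 0 b)
      ≤ ENNReal.ofReal ((2 * ε + 12 * δ) + 16 * δ) :=
    (evar_le_of_lip' hlip).trans (ENNReal.ofReal_le_ofReal (by linarith))
  constructor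
  · refine le_trans ?_ hevar
    refine iInf_le_of_le γp ?_
    refine iInf_le_of_le b ?_
    refine iInf_le_of_le hb0 ?_
    refine iInf_le_of_le hcont ?_
    refine iInf_le_of_le hγ0 ?_
    refine iInf_le_of_le hγb ?_
    exact iInf_le _ hXS
  · exact ⟨γp, b, hb0, hcont, hγ0, hγb, fun t ht => hmem t ht S hS, hevar⟩
end

section
/- Let S and S₀ be two distinct members of Σ. Then the projection of S onto S₀ has d_S-length at most C + 16δ; that is, for all x, y ∈ S, d_S(Pr(x,S₀), Pr(y,S₀)) ≤ C + 16δ, where C = 2ε + 12δ. -/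
open scoped ENNReal Classical
open Set

/-!
The projections are `8δ`-close: by two thin triangles, and because `[x, y] ⊆ S` is far from
`S₀`, the midpoint `m ∈ S₀` of `[px, py]` is `2δ`-close to a point of `[px, x]` or `[py, y]`;
and if a point of `[w, z]`, `w` a nearest point of `z` in `S₀`, is `c`-close to `m ∈ S₀`, then
`m` is `2c`-close to `w`.

As `[px, py]` may run through the interior of `S₀`, the projections are joined instead by the
detour `px → u → v → py`, where `u ∈ [px, x]` is at distance `8δ` from `px` and `v ∈ [py, y]`
is `2δ`-close to `u` (thin triangles again). A geodesic from a nearest point towards the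
projected point leaves `S₀` at once, `[u, v]` stays away from `S₀`, and the whole detour lies
within `R` of `S₀`, hence avoids every other member of `Σ'`. Its length is at most
`8δ + 2δ + 18δ`.
-/

open Metric

section

variable {X : Type*} [MetricSpace X]

section Geodesic

variable {γ : ℝ → X} {x y : X} {t : ℝ}

theorem IsGeodesicFrom.dist_left (hγ : IsGeodesicFrom γ x y) (ht : t ∈ Icc 0 (dist x y)) :
    dist x (γ t) = t := by
  rw [← hγ.1, hγ.2.2 0 ⟨le_rfl, dist_nonneg⟩ t ht, zero_sub, abs_neg, abs_of_nonneg ht.1]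

theorem IsGeodesicFrom.dist_right (hγ : IsGeodesicFrom γ x y) (ht : t ∈ Icc 0 (dist x y)) :
    dist (γ t) y = dist x y - t := by
  have h := hγ.2.2 t ht (dist x y) ⟨dist_nonneg, le_rfl⟩
  rwa [hγ.2.1, abs_of_nonpos (by linarith [ht.2]), neg_sub] at h

theorem IsGeodesicFrom.dist_add_dist (hγ : IsGeodesicFrom γ x y) (ht : t ∈ Icc 0 (dist x y)) :
    dist x (γ t) + dist (γ t) y = dist x y := by
  rw [hγ.dist_left ht, hγ.dist_right ht]
  ring

theorem IsGeodesicFrom.lipschitzOnWith (hγ : IsGeodesicFrom γ x y) :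
    LipschitzOnWith 1 γ (Icc 0 (dist x y)) :=
  LipschitzOnWith.of_dist_le_mul fun s hs t ht => by
    rw [hγ.2.2 s hs t ht, NNReal.coe_one, one_mul, Real.dist_eq]

end Geodesic

theorem dist_add_dist_eq_trans {a b c q : X} (hb : dist a b + dist b c = dist a c)
    (hq : dist a q + dist q b = dist a b) : dist a q + dist q c = dist a c := by
  linarith [dist_triangle a q c, dist_triangle q b c]

section NearestPoint

variable {S₀ : Set X} {z w q p : X}

theorem dist_le_dist_of_dist_eq_infDist (hwd : dist z w = infDist z S₀)
    (hq : dist w q + dist q z = dist w z) (hp : p ∈ S₀) : dist w q ≤ dist q p := by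
  linarith [infDist_le_dist_of_mem (x := z) hp, dist_triangle z q p, dist_comm z w, dist_comm z q]

theorem dist_le_two_mul_of_dist_eq_infDist (hwd : dist z w = infDist z S₀)
    (hq : dist w q + dist q z = dist w z) (hp : p ∈ S₀) : dist p w ≤ 2 * dist q p := by
  linarith [dist_le_dist_of_dist_eq_infDist hwd hq hp, dist_triangle p q w, dist_comm p q,
    dist_comm q w]

theorem notMem_interior_of_dist_eq_infDist (hgeo : GeodesicSpace X)
    (hwd : dist z w = infDist z S₀) (hwz : w ≠ z) (hq : dist w q + dist q z = dist w z) :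
    q ∉ interior S₀ := by
  intro hint
  rcases eq_or_ne w q with rfl | hwq
  · obtain ⟨γ, hγ⟩ := hgeo w z
    obtain ⟨r, hr, hball⟩ := isOpen_iff.1 isOpen_interior w hint
    have hs0 : 0 < min (r / 2) (dist w z) := lt_min (half_pos hr) (dist_pos.2 hwz)
    have hs : min (r / 2) (dist w z) ∈ Icc 0 (dist w z) := ⟨hs0.le, min_le_right _ _⟩
    have hmem : γ (min (r / 2) (dist w z)) ∈ S₀ := interior_subset <| hball <| by
      rw [mem_ball, dist_comm, hγ.dist_left hs]
      exact (min_le_left _ _).trans_lt (half_lt_self hr)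
    have := dist_le_dist_of_dist_eq_infDist hwd (hγ.dist_add_dist hs) hmem
    rw [dist_self, hγ.dist_left hs] at this
    linarith
  · have := dist_le_dist_of_dist_eq_infDist hwd hq (interior_subset hint)
    exact hwq (dist_le_zero.1 (by rwa [dist_self] at this))

end NearestPoint

section PathMetric

variable {Sig : Set (Set X)} {γ γ' : ℝ → X} {b b' : ℝ} {x y z : X}

theorem dS_le_eVariationOn (hb : 0 ≤ b) (hγ : ContinuousOn γ (Icc 0 b)) (h0 : γ 0 = x)
    (h1 : γ b = y) (hX : ∀ t ∈ Icc 0 b, γ t ∈ XSset Sig) :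
    dS Sig x y ≤ eVariationOn γ (Icc 0 b) :=
  iInf_le_of_le γ <| iInf_le_of_le b <| iInf_le_of_le hb <| iInf_le_of_le hγ <|
    iInf_le_of_le h0 <| iInf_le_of_le h1 <| iInf_le_of_le hX le_rfl

theorem dS_le_add_eVariationOn (hb : 0 ≤ b) (hγ : ContinuousOn γ (Icc 0 b)) (h0 : γ 0 = x)
    (h1 : γ b = y) (hX : ∀ t ∈ Icc 0 b, γ t ∈ XSset Sig) (hb' : 0 ≤ b')
    (hγ' : ContinuousOn γ' (Icc 0 b')) (h0' : γ' 0 = y) (h1' : γ' b' = z)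
    (hX' : ∀ t ∈ Icc 0 b', γ' t ∈ XSset Sig) :
    dS Sig x z ≤ eVariationOn γ (Icc 0 b) + eVariationOn γ' (Icc 0 b') := by
  set f : ℝ → X := fun t => if t ≤ b then γ t else γ' (t - b)
  have hf : EqOn f γ (Icc 0 b) := fun t ht => if_pos ht.2
  have hf' : EqOn f (γ' ∘ (· - b)) (Icc b (b + b')) := fun t ht => by
    rcases eq_or_lt_of_le ht.1 with rfl | hlt
    · simp [f, h1, h0']
    · simp [f, hlt.not_ge]
  have hshift : MapsTo (· - b) (Icc b (b + b')) (Icc 0 b') := fun t ht =>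
    ⟨by linarith [ht.1], by linarith [ht.2]⟩
  have hcont : ContinuousOn f (Icc 0 (b + b')) := by
    rw [← Icc_union_Icc_eq_Icc hb (le_add_of_nonneg_right hb')]
    exact (hγ.congr hf).union_of_isClosed
      ((hγ'.comp (continuousOn_id.sub continuousOn_const) hshift).congr hf')
      isClosed_Icc isClosed_Icc
  refine (dS_le_eVariationOn (add_nonneg hb hb') hcont ?_ ?_ ?_).trans_eq ?_
  · rw [hf ⟨le_rfl, hb⟩, h0]
  · rw [hf' ⟨le_add_of_nonneg_right hb', le_rfl⟩, Function.comp_apply, add_sub_cancel_left, h1']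
  · intro t ht
    rcases le_total t b with htb | hbt
    · rw [hf ⟨ht.1, htb⟩]
      exact hX t ⟨ht.1, htb⟩
    · rw [hf' ⟨hbt, ht.2⟩]
      exact hX' _ (hshift ⟨hbt, ht.2⟩)
  · have hsplit := eVariationOn.Icc_add_Icc f (s := univ) hb (le_add_of_nonneg_right hb')
      (mem_univ b)
    simp only [univ_inter] at hsplit
    rw [← hsplit, eVariationOn.eq_of_eqOn hf, eVariationOn.eq_of_eqOn hf',
      eVariationOn.comp_eq_of_monotoneOn γ' _ (fun _ _ _ _ h => sub_le_sub_right h b),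
      image_sub_const_Icc, sub_self, add_sub_cancel_left]

theorem dS_triangle : dS Sig x z ≤ dS Sig x y + dS Sig y z := by
  simp only [dS, ENNReal.iInf_add, ENNReal.add_iInf, le_iInf_iff]
  exact fun γ' b' hb' hγ' h0' h1' hX' γ b hb hγ h0 h1 hX =>
    dS_le_add_eVariationOn hb hγ h0 h1 hX hb' hγ' h0' h1' hX'

theorem dS_swap_le : dS Sig x y ≤ dS Sig y x := by
  simp only [dS, le_iInf_iff]
  intro γ b hb hγ h0 h1 hX
  have hflip : MapsTo (b - ·) (Icc 0 b) (Icc 0 b) := fun t ht =>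
    ⟨by linarith [ht.2], by linarith [ht.1]⟩
  refine (dS_le_eVariationOn (γ := γ ∘ (b - ·)) hb
    (hγ.comp (continuousOn_const.sub continuousOn_id) hflip) (by simpa using h1)
    (by simpa using h0) fun t ht => hX _ (hflip ht)).trans_eq ?_
  rw [eVariationOn.comp_eq_of_antitoneOn γ _ (fun _ _ _ _ h => sub_le_sub_left h b),
    image_const_sub_Icc, sub_self, sub_zero]

theorem dS_comm : dS Sig x y = dS Sig y x :=
  le_antisymm dS_swap_le dS_swap_le

theorem dS_le_dist_of_isGeodesicFrom (hγ : IsGeodesicFrom γ x y)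
    (hX : ∀ t ∈ Icc 0 (dist x y), γ t ∈ XSset Sig) :
    dS Sig x y ≤ ENNReal.ofReal (dist x y) := by
  have hlip := hγ.lipschitzOnWith
  calc dS Sig x y ≤ eVariationOn γ (Icc 0 (dist x y)) :=
        dS_le_eVariationOn dist_nonneg hlip.continuousOn hγ.1 hγ.2.1 hX
    _ ≤ eVariationOn id (Icc 0 (dist x y)) := by
        simpa using hlip.comp_eVariationOn_le (g := id) (mapsTo_id _)
    _ = ENNReal.ofReal (dist x y) := by rw [eVariationOn_id_Icc, sub_zero]

end PathMetric

section SigmaSystem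

variable {Sig : Set (Set X)} {ε R : ℝ} {S₀ : Set X}

theorem mem_XSset_of_notMem_interior (hSig : SigmaSystem Sig ε R) (hS₀ : S₀ ∈ Sig) {p w : X}
    (hp : p ∈ S₀) (hw : w ∉ interior S₀) (hwp : dist w p < R) : w ∈ XSset Sig := by
  intro T hT hwT
  rcases eq_or_ne T S₀ with rfl | hne
  · exact hw hwT
  · exact hwp.not_ge (hSig.far T hT S₀ hS₀ hne w (interior_subset hwT) p hp)

theorem dS_le_dist_of_dist_eq_infDist (hgeo : GeodesicSpace X) (hSig : SigmaSystem Sig ε R)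
    (hS₀ : S₀ ∈ Sig) {z w q : X} (hw : w ∈ S₀) (hwd : dist z w = infDist z S₀) (hwz : w ≠ z)
    (hq : dist w q + dist q z = dist w z) (hqR : dist w q < R) :
    dS Sig w q ≤ ENNReal.ofReal (dist w q) := by
  obtain ⟨γ, hγ⟩ := hgeo w q
  refine dS_le_dist_of_isGeodesicFrom hγ fun t ht => ?_
  have hbetween := dist_add_dist_eq_trans hq (hγ.dist_add_dist ht)
  refine mem_XSset_of_notMem_interior hSig hS₀ hw
    (notMem_interior_of_dist_eq_infDist hgeo hwd hwz hbetween) ?_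
  rw [dist_comm, hγ.dist_left ht]
  exact ht.2.trans_lt hqR

theorem dS_le_dist_of_forall_dist_lt (hgeo : GeodesicSpace X) (hSig : SigmaSystem Sig ε R)
    (hS₀ : S₀ ∈ Sig) {a c p : X} (hp : p ∈ S₀) (hfar : ∀ q ∈ S₀, dist a c < dist a q)
    (hR : dist a p + dist a c < R) : dS Sig a c ≤ ENNReal.ofReal (dist a c) := by
  obtain ⟨γ, hγ⟩ := hgeo a c
  refine dS_le_dist_of_isGeodesicFrom hγ fun t ht => ?_
  have hat : dist a (γ t) ≤ dist a c := (hγ.dist_left ht).trans_le ht.2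
  refine mem_XSset_of_notMem_interior hSig hS₀ hp
    (fun h => (hfar _ (interior_subset h)).not_ge hat) ?_
  linarith [dist_triangle (γ t) a p, dist_comm a (γ t)]

end SigmaSystem

section Hyperbolic

variable {δ : ℝ} {S S₀ : Set X} {x y px py : X}

theorem DeltaHyperbolic.dist_projections_le (hhyp : DeltaHyperbolic X δ)
    (hgeo : GeodesicSpace X) (hS : GeodConvex S) (hS₀ : GeodConvex S₀)
    (hfar : ∀ a ∈ S, ∀ b ∈ S₀, 2 * δ < dist a b) (hx : x ∈ S) (hy : y ∈ S) (hpx : px ∈ S₀)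
    (hpxd : dist x px = infDist x S₀) (hpy : py ∈ S₀) (hpyd : dist y py = infDist y S₀) :
    dist px py ≤ 8 * δ := by
  obtain ⟨β, hβ⟩ := hgeo px py
  have hmid : dist px py / 2 ∈ Icc 0 (dist px py) := ⟨by positivity, half_le_self dist_nonneg⟩
  set m := β (dist px py / 2)
  have hm : m ∈ S₀ := hS₀ px hpx py hpy β hβ _ hmid
  have hmpx : dist m px = dist px py / 2 := by rw [dist_comm, hβ.dist_left hmid]
  have hmpy : dist m py = dist px py / 2 := by rw [hβ.dist_right hmid]; ring
  obtain ⟨γ₁, hγ₁⟩ := hgeo px x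
  obtain ⟨γ₂, hγ₂⟩ := hgeo x py
  obtain ⟨p, hp | hp, hpm⟩ := hhyp px x py γ₁ γ₂ β hγ₁ hγ₂ hβ _ hmid
  · obtain ⟨s, hs, rfl⟩ := hp
    have := dist_le_two_mul_of_dist_eq_infDist hpxd (hγ₁.dist_add_dist hs) hm
    linarith [dist_comm m (γ₁ s), dist_nonneg (x := m) (y := γ₁ s)]
  · obtain ⟨s, hs, rfl⟩ := hp
    obtain ⟨γ₃, hγ₃⟩ := hgeo x y
    obtain ⟨γ₄, hγ₄⟩ := hgeo y py
    obtain ⟨q, hq | hq, hqp⟩ := hhyp x y py γ₃ γ₄ γ₂ hγ₃ hγ₄ hγ₂ s hs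
    · obtain ⟨s', hs', rfl⟩ := hq
      have := hfar _ (hS x hx y hy γ₃ hγ₃ s' hs') m hm
      linarith [dist_triangle (γ₃ s') (γ₂ s) m, dist_comm (γ₂ s) (γ₃ s'), dist_comm m (γ₂ s)]
    · obtain ⟨s', hs', rfl⟩ := hq
      have hbetween : dist py (γ₄ s') + dist (γ₄ s') y = dist py y := by
        rw [dist_comm py, dist_comm _ y, dist_comm py y, add_comm]
        exact hγ₄.dist_add_dist hs'
      have := dist_le_two_mul_of_dist_eq_infDist hpyd hbetween hm
      linarith [dist_triangle (γ₄ s') (γ₂ s) m, dist_comm (γ₂ s) (γ₄ s'), dist_comm m (γ₂ s)]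

theorem DeltaHyperbolic.exists_between_dist_le (hhyp : DeltaHyperbolic X δ)
    (hgeo : GeodesicSpace X) (hS : GeodConvex S) (hS₀ : GeodConvex S₀) (hx : x ∈ S)
    (hy : y ∈ S) (hpx : px ∈ S₀) (hpxd : dist x px = infDist x S₀) (hpy : py ∈ S₀)
    {γ : ℝ → X} {r : ℝ} (hγ : IsGeodesicFrom γ px x) (hr : r ∈ Icc 0 (dist px x))
    (hδr : δ < r) (hfar : ∀ a ∈ S, 2 * δ + r < dist a px) :
    ∃ v, dist py v + dist v y = dist py y ∧ dist (γ r) v ≤ 2 * δ := by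
  obtain ⟨β, hβ⟩ := hgeo px py
  obtain ⟨γ₁, hγ₁⟩ := hgeo py x
  obtain ⟨p, hp | hp, hpu⟩ := hhyp px py x β γ₁ γ hβ hγ₁ hγ r hr
  · obtain ⟨s, hs, rfl⟩ := hp
    have := dist_le_dist_of_dist_eq_infDist hpxd (hγ.dist_add_dist hr)
      (hS₀ px hpx py hpy β hβ s hs)
    rw [hγ.dist_left hr] at this
    linarith
  · obtain ⟨s, hs, rfl⟩ := hp
    obtain ⟨γ₂, hγ₂⟩ := hgeo py y
    obtain ⟨γ₃, hγ₃⟩ := hgeo y x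
    obtain ⟨q, hq | hq, hqp⟩ := hhyp py y x γ₂ γ₃ γ₁ hγ₂ hγ₃ hγ₁ s hs
    · obtain ⟨s', hs', rfl⟩ := hq
      exact ⟨γ₂ s', hγ₂.dist_add_dist hs', by linarith [dist_triangle (γ r) (γ₁ s) (γ₂ s')]⟩
    · obtain ⟨s', hs', rfl⟩ := hq
      have := hfar _ (hS y hy x hx γ₃ hγ₃ s' hs')
      linarith [dist_triangle4 (γ₃ s') (γ₁ s) (γ r) px, dist_comm (γ₁ s) (γ₃ s'),
        dist_comm (γ r) (γ₁ s), hγ.dist_left hr, dist_comm px (γ r)]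

end Hyperbolic

end

theorem projection_of_member_bounded_general
    {X : Type*} [MetricSpace X]
    (hgeo : GeodesicSpace X) (δ ε R : ℝ) (hδ : 0 ≤ δ) (hε : 0 ≤ ε)
    (hhyp : DeltaHyperbolic X δ) (Sig : Set (Set X)) (hSig : SigmaSystem Sig ε R)
    (hconv : ∀ S ∈ Sig, GeodConvex S) (hR : 24 * δ + 4 * ε < R)
    (S S₀ : Set X) (hS : S ∈ Sig) (hS₀ : S₀ ∈ Sig) (hne : S ≠ S₀)
    (x y : X) (hx : x ∈ S) (hy : y ∈ S)
    (px py : X)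
    (hpx : px ∈ S₀) (hpxd : dist x px = Metric.infDist x S₀)
    (hpy : py ∈ S₀) (hpyd : dist y py = Metric.infDist y S₀) :
    dS Sig px py ≤ ENNReal.ofReal ((2 * ε + 12 * δ) + 16 * δ) := by
  have hfar : ∀ a ∈ S, ∀ b ∈ S₀, R ≤ dist a b := hSig.far S hS S₀ hS₀ hne
  have hpx_ne : px ≠ x := by rintro rfl; linarith [hfar px hx px hpx, dist_self px]
  have hpy_ne : py ≠ y := by rintro rfl; linarith [hfar py hy py hpy, dist_self py]
  have hL : dist px py ≤ 8 * δ := hhyp.dist_projections_le hgeo (hconv S hS) (hconv S₀ hS₀)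
    (fun a ha b hb => by linarith [hfar a ha b hb]) hx hy hpx hpxd hpy hpyd
  rcases hδ.eq_or_lt with rfl | hδ
  · obtain rfl : px = py := dist_le_zero.1 (by linarith)
    calc dS Sig px px ≤ ENNReal.ofReal (dist px px) :=
          dS_le_dist_of_dist_eq_infDist hgeo hSig hS₀ hpx hpxd hpx_ne (by simp)
            (by linarith [dist_self px])
      _ ≤ _ := by simp
  obtain ⟨γ, hγ⟩ := hgeo px x
  have hr : 8 * δ ∈ Icc 0 (dist px x) := ⟨by positivity, by linarith [hfar x hx px hpx, dist_comm x px]⟩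
  obtain ⟨v, hv, huv⟩ := hhyp.exists_between_dist_le hgeo (hconv S hS) (hconv S₀ hS₀) hx hy
    hpx hpxd hpy hγ hr (by linarith) (fun a ha => by linarith [hfar a ha px hpx])
  set u := γ (8 * δ)
  have hpxu : dist px u = 8 * δ := hγ.dist_left hr
  have hpyv : dist py v ≤ 18 * δ := by linarith [dist_triangle4 py px u v, dist_comm py px]
  calc dS Sig px py ≤ dS Sig px u + (dS Sig u v + dS Sig v py) :=
        dS_triangle.trans (add_le_add le_rfl dS_triangle)
    _ ≤ ENNReal.ofReal (dist px u) + (ENNReal.ofReal (dist u v) + ENNReal.ofReal (dist py v)) := by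
        gcongr
        · exact dS_le_dist_of_dist_eq_infDist hgeo hSig hS₀ hpx hpxd hpx_ne
            (hγ.dist_add_dist hr) (by linarith)
        · refine dS_le_dist_of_forall_dist_lt hgeo hSig hS₀ hpx (fun c hc => ?_)
            (by linarith [dist_comm u px])
          linarith [dist_le_dist_of_dist_eq_infDist hpxd (hγ.dist_add_dist hr) hc]
        · rw [dS_comm]
          exact dS_le_dist_of_dist_eq_infDist hgeo hSig hS₀ hpy hpyd hpy_ne hv (by linarith)
    _ ≤ ENNReal.ofReal ((2 * ε + 12 * δ) + 16 * δ) := by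
        rw [← ENNReal.ofReal_add dist_nonneg dist_nonneg,
          ← ENNReal.ofReal_add dist_nonneg (by positivity)]
        exact ENNReal.ofReal_le_ofReal (by linarith)

/-- projection between members of `Σ'`. If `S` and `S₀` are distinct
members of `Σ'`, then the projection of `S` onto `S₀` has `d_S`-length at most `C + 16δ`:
for all `x, y ∈ S` with nearest-point projections `px, py` onto `S₀`,
`d_S(px, py) ≤ C + 16δ`, where `C = 2ε + 12δ`. -/
theorem projection_of_member_bounded
    {X : Type*} [MetricSpace X] [CompleteSpace X] [LocallyCompactSpace X]
    (hgeo : GeodesicSpace X) (δ ε R : ℝ) (hδ : 0 ≤ δ) (hε : 0 ≤ ε)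
    (hhyp : DeltaHyperbolic X δ) (Sig : Set (Set X)) (hSig : SigmaSystem Sig ε R)
    (hconv : ∀ S ∈ Sig, GeodConvex S) (hR : 24 * δ + 4 * ε < R)
    (S S₀ : Set X) (hS : S ∈ Sig) (hS₀ : S₀ ∈ Sig) (hne : S ≠ S₀)
    (x y : X) (hx : x ∈ S) (hy : y ∈ S)
    (px py : X)
    (hpx : px ∈ S₀) (hpxd : dist x px = Metric.infDist x S₀)
    (hpy : py ∈ S₀) (hpyd : dist y py = Metric.infDist y S₀) :
    dS Sig px py ≤ ENNReal.ofReal ((2 * ε + 12 * δ) + 16 * δ) :=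
  projection_of_member_bounded_general hgeo δ ε R hδ hε hhyp Sig hSig hconv hR S S₀ hS hS₀ hne x y
    hx hy px py hpx hpxd hpy hpyd
end
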